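/- arXiv:1808.02239 — 3 statements merged into one kernel-verified Lean document; each statement's English description precedes it below -/
import Mathlib

section
/- Let a, γ > 0 and let x: [0,∞) → ℝ satisfy x' ≤ x(a - γx) with x(0) = x̄ > 0. Then for all t ≥ 0, x(t) ≤ x̄·exp(a t) / (1 + x̄·γ·a⁻¹·(exp(a t) − 1)). -/
/-!
The logistic curve `φ` solves `φ' = φ (a - γ φ)` with `φ 0 = x̄`, and it is positive, so the claim
is a comparison principle for this ODE. For `δ > 0` the curve `φ + δ e^{a (s - t)}` is a strict
supersolution, because the quadratic term `-γ y²` of the right-hand side is strictly decreasing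
on `(0, ∞)`; a subsolution cannot cross a strict supersolution, and `δ → 0` gives `x t ≤ φ t`.
-/

open Set Real

noncomputable def logistic (a γ x₀ t : ℝ) : ℝ :=
  x₀ * exp (a * t) / (1 + x₀ * γ * a⁻¹ * (exp (a * t) - 1))

lemma exp_sub_one_mul_inv_nonneg (a : ℝ) {t : ℝ} (ht : 0 ≤ t) :
    0 ≤ (exp (a * t) - 1) * a⁻¹ := by
  rcases le_total a 0 with ha | ha
  · have : exp (a * t) ≤ 1 := exp_le_one_iff.2 (mul_nonpos_of_nonpos_of_nonneg ha ht)
    exact mul_nonneg_of_nonpos_of_nonpos (by linarith) (inv_nonpos.2 ha)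
  · have : 1 ≤ exp (a * t) := one_le_exp (mul_nonneg ha ht)
    exact mul_nonneg (by linarith) (inv_nonneg.2 ha)

lemma logistic_denom_pos (a : ℝ) {γ x₀ t : ℝ} (hγ : 0 ≤ γ) (hx₀ : 0 ≤ x₀) (ht : 0 ≤ t) :
    0 < 1 + x₀ * γ * a⁻¹ * (exp (a * t) - 1) := by
  have := mul_nonneg (mul_nonneg hx₀ hγ) (exp_sub_one_mul_inv_nonneg a ht)
  linarith [show x₀ * γ * a⁻¹ * (exp (a * t) - 1) = x₀ * γ * ((exp (a * t) - 1) * a⁻¹) by ring]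

lemma logistic_pos (a : ℝ) {γ x₀ t : ℝ} (hγ : 0 ≤ γ) (hx₀ : 0 < x₀) (ht : 0 ≤ t) :
    0 < logistic a γ x₀ t :=
  div_pos (by positivity) (logistic_denom_pos a hγ hx₀.le ht)

@[simp]
lemma logistic_zero (a γ x₀ : ℝ) : logistic a γ x₀ 0 = x₀ := by
  simp [logistic]

lemma hasDerivAt_logistic {a : ℝ} (ha : a ≠ 0) (γ x₀ : ℝ) {t : ℝ}
    (hD : 1 + x₀ * γ * a⁻¹ * (exp (a * t) - 1) ≠ 0) :
    HasDerivAt (logistic a γ x₀)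
      (logistic a γ x₀ t * (a - γ * logistic a γ x₀ t)) t := by
  have hexp : HasDerivAt (fun s ↦ exp (a * s)) (exp (a * t) * a) t := by
    simpa using ((hasDerivAt_id t).const_mul a).exp
  refine ((hexp.const_mul x₀).div
    (((hexp.sub_const 1).const_mul (x₀ * γ * a⁻¹)).const_add 1) hD).congr_deriv ?_
  have hD_eq : 1 + x₀ * γ * a⁻¹ * (exp (a * t) - 1) = (x₀ * γ * (exp (a * t) - 1) + a) / a := by
    field_simp
    ring
  have hD' : x₀ * γ * (exp (a * t) - 1) + a ≠ 0 := fun h ↦ hD (by rw [hD_eq, h, zero_div])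
  unfold logistic
  rw [hD_eq]
  field_simp

lemma logistic_rhs_add_lt (a : ℝ) {γ y δ : ℝ} (hγ : 0 < γ) (hy : 0 < y) (hδ : 0 < δ) :
    (y + δ) * (a - γ * (y + δ)) < y * (a - γ * y) + a * δ := by
  nlinarith [mul_pos hγ (mul_pos hy hδ), mul_pos hγ (mul_pos hδ hδ)]

theorem le_of_logistic_comparison {a γ : ℝ} (hγ : 0 < γ) {x x' φ : ℝ → ℝ} {t₀ t : ℝ}
    (ht : t₀ ≤ t) (hx : ∀ s ∈ Icc t₀ t, HasDerivAt x (x' s) s)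
    (hsub : ∀ s ∈ Icc t₀ t, x' s ≤ x s * (a - γ * x s))
    (hφ : ∀ s ∈ Icc t₀ t, HasDerivAt φ (φ s * (a - γ * φ s)) s)
    (hφ_pos : ∀ s ∈ Icc t₀ t, 0 < φ s) (h₀ : x t₀ ≤ φ t₀) :
    x t ≤ φ t := by
  refine le_of_forall_pos_le_add fun δ hδ ↦ ?_
  set B : ℝ → ℝ := fun s ↦ φ s + δ * exp (a * (s - t))
  set B' : ℝ → ℝ := fun s ↦ φ s * (a - γ * φ s) + a * (δ * exp (a * (s - t)))
  have hB : ∀ s ∈ Icc t₀ t, HasDerivAt B (B' s) s := fun s hs ↦ by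
    have hexp : HasDerivAt (fun s ↦ exp (a * (s - t))) (exp (a * (s - t)) * a) s := by
      simpa using (((hasDerivAt_id s).sub_const t).const_mul a).exp
    exact ((hφ s hs).add (hexp.const_mul δ)).congr_deriv (by ring)
  have hB_strict : ∀ s ∈ Ico t₀ t, x s = B s → x' s < B' s := fun s hs hxB ↦
    calc x' s ≤ B s * (a - γ * B s) := hxB ▸ hsub s (Ico_subset_Icc_self hs)
      _ < B' s := logistic_rhs_add_lt a hγ (hφ_pos s (Ico_subset_Icc_self hs)) (by positivity)
  have hB₀ : x t₀ ≤ B t₀ := by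
    have : 0 < δ * exp (a * (t₀ - t)) := by positivity
    simp only [B]
    linarith
  simpa [B] using image_le_of_deriv_right_lt_deriv_boundary'
    (fun s hs ↦ (hx s hs).continuousAt.continuousWithinAt)
    (fun s hs ↦ (hx s (Ico_subset_Icc_self hs)).hasDerivWithinAt) hB₀
    (fun s hs ↦ (hB s hs).continuousAt.continuousWithinAt)
    (fun s hs ↦ (hB s (Ico_subset_Icc_self hs)).hasDerivWithinAt) hB_strict ⟨ht, le_rfl⟩

/-- Logistic comparison estimate: if `x' ≤ x (a - γ x)`, `x(0) = x̄ > 0`, then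
`x t ≤ x̄ exp(a t) / (1 + x̄ γ a⁻¹ (exp(a t) - 1))` for `t ≥ 0`. -/
theorem stmt0 (a γ : ℝ) (ha : 0 < a) (hγ : 0 < γ)
    (x x' : ℝ → ℝ) (xbar : ℝ) (hxbar : 0 < xbar) (hx0 : x 0 = xbar)
    (hderiv : ∀ t, 0 ≤ t → HasDerivAt x (x' t) t)
    (hineq : ∀ t, 0 ≤ t → x' t ≤ x t * (a - γ * x t)) :
    ∀ t, 0 ≤ t →
      x t ≤ xbar * Real.exp (a * t) /
        (1 + xbar * γ * a⁻¹ * (Real.exp (a * t) - 1)) := fun t ht ↦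
  le_of_logistic_comparison (φ := logistic a γ xbar) hγ ht
    (fun s hs ↦ hderiv s hs.1) (fun s hs ↦ hineq s hs.1)
    (fun s hs ↦ hasDerivAt_logistic ha.ne' γ xbar (logistic_denom_pos a hγ.le hxbar.le hs.1).ne')
    (fun s hs ↦ logistic_pos a hγ.le hxbar hs.1) (by rw [hx0, logistic_zero])
end

section
/- Let x: [0,∞) → ℝ be continuously differentiable and bounded with x(t) ≥ X > 0 for all t, and satisfy x' = x(φ(t) − μ − γx) where φ is continuous and bounded, μ, γ > 0. Then lim_{t→∞} [⟨φ⟩_t − μ − γ⟨x⟩_t] = 0, where ⟨f⟩_t = (1/t)∫₀ᵗ f(s) ds. -/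
/-!
Dividing `x' = x (φ - μ - γ x)` by `x` gives `(log x)' = φ - μ - γ x`, so integrating over `[0, t]`
and dividing by `t` expresses `⟨φ⟩_t - μ - γ ⟨x⟩_t` as `(log x(t) - log x(0)) / t`. Since `x` stays
in `[X, C]` with `X > 0`, the numerator is bounded and the quotient tends to zero.
-/

open MeasureTheory intervalIntegral Filter Set

theorem HasDerivAt.log_of_eq_mul {x : ℝ → ℝ} {g t : ℝ} (hx : HasDerivAt x (x t * g) t)
    (hxt : x t ≠ 0) : HasDerivAt (fun s => Real.log (x s)) g t := by
  simpa only [mul_div_cancel_left₀ g hxt] using hx.log hxt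

theorem integral_eq_log_sub_log_of_hasDerivAt_mul {x g : ℝ → ℝ} {a b : ℝ}
    (hx : ∀ t ∈ uIcc a b, HasDerivAt x (x t * g t) t) (hx0 : ∀ t ∈ uIcc a b, x t ≠ 0)
    (hg : IntervalIntegrable g volume a b) :
    ∫ t in a..b, g t = Real.log (x b) - Real.log (x a) :=
  integral_eq_sub_of_hasDerivAt (fun t ht => (hx t ht).log_of_eq_mul (hx0 t ht)) hg

theorem stmt7_general (x : ℝ → ℝ) (φ : ℝ → ℝ) (μ γ X C : ℝ)
    (hX : 0 < X)
    (hφcont : Continuous φ)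
    (hxlo : ∀ t, 0 ≤ t → X ≤ x t) (hxhi : ∀ t, 0 ≤ t → x t ≤ C)
    (hode : ∀ t, 0 ≤ t → HasDerivAt x (x t * (φ t - μ - γ * x t)) t) :
    Filter.Tendsto
      (fun t => (1 / t) * (∫ s in (0:ℝ)..t, φ s) - μ -
        γ * ((1 / t) * ∫ s in (0:ℝ)..t, x s))
      Filter.atTop (nhds 0) := by
  have hxpos : ∀ t, 0 ≤ t → 0 < x t := fun t ht => hX.trans_le (hxlo t ht)
  have hlog_mem : ∀ t, 0 ≤ t → Real.log (x t) ∈ Icc (Real.log X) (Real.log C) := fun t ht =>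
    ⟨Real.log_le_log hX (hxlo t ht), Real.log_le_log (hxpos t ht) (hxhi t ht)⟩
  have hbalance : ∀ t, 0 ≤ t →
      (∫ s in (0:ℝ)..t, φ s) - μ * t - γ * ∫ s in (0:ℝ)..t, x s
        = Real.log (x t) - Real.log (x 0) := by
    intro t ht
    have hnonneg : ∀ s ∈ uIcc 0 t, 0 ≤ s := fun s hs => (uIcc_of_le ht ▸ hs).1
    have hxint : IntervalIntegrable x volume 0 t :=
      ContinuousOn.intervalIntegrable_of_Icc ht fun s hs =>
        (hode s hs.1).continuousAt.continuousWithinAt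
    have hφint : IntervalIntegrable φ volume 0 t := hφcont.intervalIntegrable 0 t
    rw [← integral_eq_log_sub_log_of_hasDerivAt_mul (fun s hs => hode s (hnonneg s hs))
      (fun s hs => (hxpos s (hnonneg s hs)).ne')
      ((hφint.sub intervalIntegrable_const).sub (hxint.const_mul γ)),
      integral_sub (hφint.sub intervalIntegrable_const) (hxint.const_mul γ),
      integral_sub hφint intervalIntegrable_const, intervalIntegral.integral_const,
      intervalIntegral.integral_const_mul]
    simp [mul_comm]
  have hbdd : IsBoundedUnder (· ≤ ·) atTop ((‖·‖) ∘ fun t => Real.log (x t) - Real.log (x 0)) :=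
    isBoundedUnder_of_eventually_le <| eventually_atTop.2 ⟨0, fun t ht =>
      abs_sub_le_of_le_of_le (hlog_mem t ht).1 (hlog_mem t ht).2 (hlog_mem 0 le_rfl).1
        (hlog_mem 0 le_rfl).2⟩
  refine (tendsto_inv_atTop_zero.zero_mul_isBoundedUnder_le hbdd).congr' ?_
  filter_upwards [eventually_gt_atTop 0] with t ht
  rw [← hbalance t ht.le]
  field_simp

/-- Time-averaging the per-capita growth equation: if `x' = x(φ - μ - γx)`
with `x` bounded and bounded away from zero, then
`⟨φ⟩_t - μ - γ⟨x⟩_t → 0` as `t → ∞`. -/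
theorem stmt7 (x : ℝ → ℝ) (φ : ℝ → ℝ) (μ γ X C : ℝ)
    (hμ : 0 < μ) (hγ : 0 < γ) (hX : 0 < X)
    (hφcont : Continuous φ) (hφbd : ∀ t, |φ t| ≤ C)
    (hxlo : ∀ t, 0 ≤ t → X ≤ x t) (hxhi : ∀ t, 0 ≤ t → x t ≤ C)
    (hode : ∀ t, 0 ≤ t → HasDerivAt x (x t * (φ t - μ - γ * x t)) t) :
    Filter.Tendsto
      (fun t => (1 / t) * (∫ s in (0:ℝ)..t, φ s) - μ -
        γ * ((1 / t) * ∫ s in (0:ℝ)..t, x s))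
      Filter.atTop (nhds 0) :=
  stmt7_general x φ μ γ X C hX hφcont hxlo hxhi hode
end

section
/- Let x: [0,∞) → ℝ be continuously differentiable, bounded, with x(t) ≥ X > 0 for all t, satisfying x' = x(φ(t) − μ − γx) with φ continuous bounded and μ, γ > 0. Then for the time averages, ⟨x·φ⟩_t ≥ (μ + γX)·⟨x⟩_t + ξ(t) where ξ(t) = (x(t) − x(0))/t → 0 as t → ∞. In particular liminf_{t→∞}[⟨xφ⟩_t − (μ + γX)⟨x⟩_t] ≥ 0. -/
open MeasureTheory intervalIntegral

/-- Inequality (23): time-averaging `x' = x(φ - μ - γx)` with `x ≥ X > 0`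
gives `⟨xφ⟩_t ≥ (μ + γX)⟨x⟩_t + (x t - x 0)/t`, and in particular
`liminf_{t→∞} (⟨xφ⟩_t - (μ + γX)⟨x⟩_t) ≥ 0`. -/
theorem stmt8 (x : ℝ → ℝ) (φ : ℝ → ℝ) (μ γ X C : ℝ)
    (hμ : 0 < μ) (hγ : 0 < γ) (hX : 0 < X)
    (hφcont : Continuous φ) (hφbd : ∀ t, |φ t| ≤ C)
    (hxlo : ∀ t, 0 ≤ t → X ≤ x t) (hxhi : ∀ t, 0 ≤ t → x t ≤ C)
    (hode : ∀ t, 0 ≤ t → HasDerivAt x (x t * (φ t - μ - γ * x t)) t) :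
    (∀ t, 0 < t →
        (1 / t) * (∫ s in (0:ℝ)..t, x s * φ s) ≥
          (μ + γ * X) * ((1 / t) * ∫ s in (0:ℝ)..t, x s) +
            (x t - x 0) / t) ∧
      0 ≤ Filter.liminf
        (fun t => (1 / t) * (∫ s in (0:ℝ)..t, x s * φ s) -
          (μ + γ * X) * ((1 / t) * ∫ s in (0:ℝ)..t, x s))
        Filter.atTop := by
  have hxcont : ContinuousOn x (Set.Ici 0) := fun s hs =>
    ((hode s hs).continuousAt).continuousWithinAt
  have hmain : ∀ t, 0 < t →
      (1 / t) * (∫ s in (0:ℝ)..t, x s * φ s) ≥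
        (μ + γ * X) * ((1 / t) * ∫ s in (0:ℝ)..t, x s) + (x t - x 0) / t := by
    intro t ht
    have huIcc : Set.uIcc (0:ℝ) t = Set.Icc 0 t := Set.uIcc_of_le ht.le
    have hsub : Set.Icc (0:ℝ) t ⊆ Set.Ici 0 := fun s hs => hs.1
    have hxc : ContinuousOn x (Set.Icc 0 t) := hxcont.mono hsub
    have hint1 : IntervalIntegrable (fun s => x s * φ s) volume 0 t :=
      (hxc.mul (hφcont.continuousOn)).intervalIntegrable_of_Icc ht.le
    have hint2 : IntervalIntegrable (fun s => μ * x s + γ * x s ^ 2) volume 0 t := by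
      apply ContinuousOn.intervalIntegrable_of_Icc ht.le
      exact ((continuousOn_const.mul hxc).add (continuousOn_const.mul (hxc.pow 2)))
    have hint3 : IntervalIntegrable (fun s => (μ + γ * X) * x s) volume 0 t :=
      (continuousOn_const.mul hxc).intervalIntegrable_of_Icc ht.le
    have hintx : IntervalIntegrable x volume 0 t := hxc.intervalIntegrable_of_Icc ht.le
    have hderiv : ∫ s in (0:ℝ)..t, x s * (φ s - μ - γ * x s) = x t - x 0 := by
      apply integral_eq_sub_of_hasDerivAt
      · intro s hs
        rw [huIcc] at hs
        exact hode s hs.1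
      · apply ContinuousOn.intervalIntegrable_of_Icc ht.le
        exact hxc.mul (((hφcont.continuousOn.sub continuousOn_const).sub
          (continuousOn_const.mul hxc)))
    have hsplit : ∫ s in (0:ℝ)..t, x s * (φ s - μ - γ * x s)
        = (∫ s in (0:ℝ)..t, x s * φ s) - ∫ s in (0:ℝ)..t, (μ * x s + γ * x s ^ 2) := by
      rw [← integral_sub hint1 hint2]
      apply integral_congr
      intro s _
      ring
    have hmono : (∫ s in (0:ℝ)..t, (μ + γ * X) * x s)
        ≤ ∫ s in (0:ℝ)..t, (μ * x s + γ * x s ^ 2) := by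
      apply integral_mono_on ht.le hint3 hint2
      intro s hs
      have h1 : X ≤ x s := hxlo s hs.1
      have h0 : 0 < x s := lt_of_lt_of_le hX h1
      nlinarith [mul_nonneg hγ.le (mul_nonneg h0.le (sub_nonneg.2 h1))]
    have hconst : (∫ s in (0:ℝ)..t, (μ + γ * X) * x s)
        = (μ + γ * X) * ∫ s in (0:ℝ)..t, x s := integral_const_mul _ _
    have key : (∫ s in (0:ℝ)..t, x s * φ s)
        ≥ (μ + γ * X) * (∫ s in (0:ℝ)..t, x s) + (x t - x 0) := by
      rw [hsplit] at hderiv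
      rw [← hconst]
      linarith
    rw [ge_iff_le]
    have e1 : (μ + γ * X) * (1 / t * ∫ s in (0:ℝ)..t, x s) + (x t - x 0) / t
        = ((μ + γ * X) * (∫ s in (0:ℝ)..t, x s) + (x t - x 0)) / t := by
      field_simp
    have e2 : 1 / t * (∫ s in (0:ℝ)..t, x s * φ s)
        = (∫ s in (0:ℝ)..t, x s * φ s) / t := by ring
    rw [e1, e2]
    gcongr
  refine ⟨hmain, ?_⟩
  set f := fun t => (1 / t) * (∫ s in (0:ℝ)..t, x s * φ s) -
      (μ + γ * X) * ((1 / t) * ∫ s in (0:ℝ)..t, x s) with hf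
  have hXC : X ≤ C := le_trans (hxlo 0 le_rfl) (hxhi 0 le_rfl)
  have hbound : ∀ᶠ t in Filter.atTop, (X - C) / t ≤ f t := by
    filter_upwards [Filter.eventually_gt_atTop 0] with t ht
    have h1 := hmain t ht
    have h2 : (X - C) / t ≤ (x t - x 0) / t := by
      have hnum : X - C ≤ x t - x 0 := by
        have := hxlo t ht.le
        have := hxhi 0 le_rfl
        linarith
      rw [div_le_div_iff₀ ht ht]
      nlinarith
    simp only [hf]
    linarith
  have hg : Filter.Tendsto (fun t => (X - C) / t) Filter.atTop (nhds 0) :=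
    Filter.Tendsto.div_atTop tendsto_const_nhds Filter.tendsto_id
  have hgliminf : Filter.liminf (fun t => (X - C) / t) Filter.atTop = 0 :=
    hg.liminf_eq
  have hbg : Filter.IsBoundedUnder (· ≥ ·) Filter.atTop (fun t => (X - C) / t) :=
    hg.isBoundedUnder_ge
  have hC0 : 0 < C := lt_of_lt_of_le hX hXC
  have hcof : Filter.IsCoboundedUnder (· ≥ ·) Filter.atTop f := by
    apply Filter.isCoboundedUnder_ge_of_eventually_le Filter.atTop (x := C ^ 2)
    filter_upwards [Filter.eventually_gt_atTop 0] with t ht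
    have hsub : Set.Icc (0:ℝ) t ⊆ Set.Ici 0 := fun s hs => hs.1
    have hxc : ContinuousOn x (Set.Icc 0 t) := hxcont.mono hsub
    have hint1 : IntervalIntegrable (fun s => x s * φ s) volume 0 t :=
      (hxc.mul (hφcont.continuousOn)).intervalIntegrable_of_Icc ht.le
    have hintC : IntervalIntegrable (fun _ : ℝ => C ^ 2) volume 0 t :=
      intervalIntegrable_const
    have hI1 : (∫ s in (0:ℝ)..t, x s * φ s) ≤ C ^ 2 * t := by
      have : (∫ s in (0:ℝ)..t, x s * φ s) ≤ ∫ _ in (0:ℝ)..t, C ^ 2 := by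
        apply integral_mono_on ht.le hint1 hintC
        intro s hs
        have h1 : X ≤ x s := hxlo s hs.1
        have h2 : x s ≤ C := hxhi s hs.1
        have h3 : |φ s| ≤ C := hφbd s
        have h4 : φ s ≤ C := le_trans (le_abs_self _) h3
        have h5 : 0 < x s := lt_of_lt_of_le hX h1
        nlinarith [neg_abs_le (φ s)]
      simpa [mul_comm] using this
    have hI2 : 0 ≤ ∫ s in (0:ℝ)..t, x s := by
      apply integral_nonneg ht.le
      intro s hs
      exact le_trans hX.le (hxlo s hs.1)
    have hμγ : 0 ≤ μ + γ * X := by positivity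
    have h1t : 0 ≤ 1 / t := by positivity
    simp only [hf]
    have : 1 / t * (∫ s in (0:ℝ)..t, x s * φ s) ≤ 1 / t * (C ^ 2 * t) := by
      apply mul_le_mul_of_nonneg_left hI1 h1t
    have h2 : 1 / t * (C ^ 2 * t) = C ^ 2 := by field_simp
    nlinarith [mul_nonneg hμγ (mul_nonneg h1t hI2)]
  rw [← hgliminf]
  exact Filter.liminf_le_liminf hbound hbg hcof
end
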